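/- arXiv:0806.4712 — 5 statements merged into one kernel-verified Lean document; each statement's English description precedes it below -/
import Mathlib

section
/- For every δ > 0 there exists a constant D > 0 such that the following holds: for every unital C*-algebra A, every positive element a ∈ A with ‖a‖ ≤ 1, and every b ∈ A with ‖b‖ ≤ 1, one has ‖b·√a − √a·b‖ ≤ D·‖a·b − b·a‖ + δ. -/
/-!
Approximate `√` uniformly on `[0, 1]` within `δ / 2` by a polynomial `p` (Weierstrass). Since the
spectrum of `a` lies in `[0, 1]`, the functional calculus gives `‖√a - p(a)‖ ≤ δ / 2`, and replacing
`√a` by `p(a)` changes the commutator with the contraction `b` by at most `δ`. Finally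
`[aⁿ, b]` telescopes into `n` terms `aᵏ [a, b] aⁿ⁻¹⁻ᵏ`, so `‖[p(a), b]‖ ≤ C ‖[a, b]‖` with
`C = ∑ |pᵢ| i`, a constant depending only on `p`, hence only on `δ`.
-/

open Polynomial Set

section NormedRing

variable {A : Type*} [NormedRing A]

lemma norm_pow_mul_le_of_norm_le_one {a : A} (ha : ‖a‖ ≤ 1) (n : ℕ) (c : A) :
    ‖a ^ n * c‖ ≤ ‖c‖ := by
  induction n with
  | zero => simp
  | succ n ih =>
    calc ‖a ^ (n + 1) * c‖ = ‖a * (a ^ n * c)‖ := by rw [pow_succ', mul_assoc]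
      _ ≤ ‖a‖ * ‖a ^ n * c‖ := norm_mul_le _ _
      _ ≤ 1 * ‖c‖ := by gcongr
      _ = ‖c‖ := one_mul _

lemma norm_pow_mul_sub_mul_pow_le {a : A} (ha : ‖a‖ ≤ 1) (b : A) (n : ℕ) :
    ‖a ^ n * b - b * a ^ n‖ ≤ n * ‖a * b - b * a‖ := by
  induction n with
  | zero => simp
  | succ n ih =>
    have split : a ^ (n + 1) * b - b * a ^ (n + 1)
        = a ^ n * (a * b - b * a) + (a ^ n * b - b * a ^ n) * a := by
      rw [pow_succ]
      noncomm_ring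
    calc ‖a ^ (n + 1) * b - b * a ^ (n + 1)‖
        ≤ ‖a ^ n * (a * b - b * a)‖ + ‖a ^ n * b - b * a ^ n‖ * ‖a‖ := by
          rw [split]
          exact (norm_add_le _ _).trans (add_le_add le_rfl (norm_mul_le _ _))
      _ ≤ ‖a * b - b * a‖ + n * ‖a * b - b * a‖ * 1 := by
          gcongr
          exact norm_pow_mul_le_of_norm_le_one ha n _
      _ = (n + 1 : ℕ) * ‖a * b - b * a‖ := by push_cast; ring

lemma norm_aeval_mul_sub_mul_aeval_le {𝕜 : Type*} [NormedField 𝕜] [NormedAlgebra 𝕜 A]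
    {a : A} (ha : ‖a‖ ≤ 1) (b : A) (p : 𝕜[X]) :
    ‖aeval a p * b - b * aeval a p‖ ≤
      (∑ i ∈ Finset.range (p.natDegree + 1), ‖p.coeff i‖ * i) * ‖a * b - b * a‖ := by
  have expand : aeval a p * b - b * aeval a p
      = ∑ i ∈ Finset.range (p.natDegree + 1), p.coeff i • (a ^ i * b - b * a ^ i) := by
    simp only [aeval_eq_sum_range, Finset.sum_mul, Finset.mul_sum, ← Finset.sum_sub_distrib,
      smul_sub, smul_mul_assoc, mul_smul_comm]
  rw [expand, Finset.sum_mul]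
  refine (norm_sum_le _ _).trans (Finset.sum_le_sum fun i _ ↦ ?_)
  rw [norm_smul, mul_assoc]
  gcongr
  exact norm_pow_mul_sub_mul_pow_le ha b i

lemma norm_mul_sub_mul_le_of_norm_le_one {b : A} (hb : ‖b‖ ≤ 1) (x y : A) :
    ‖x * b - b * x‖ ≤ ‖y * b - b * y‖ + 2 * ‖x - y‖ := by
  have split : x * b - b * x = (y * b - b * y) + ((x - y) * b - b * (x - y)) := by noncomm_ring
  have hright : ‖(x - y) * b‖ ≤ ‖x - y‖ :=
    (norm_mul_le _ _).trans (mul_le_of_le_one_right (norm_nonneg _) hb)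
  have hleft : ‖b * (x - y)‖ ≤ ‖x - y‖ :=
    (norm_mul_le _ _).trans (mul_le_of_le_one_left (norm_nonneg _) hb)
  rw [split]
  linarith [norm_add_le (y * b - b * y) ((x - y) * b - b * (x - y)),
    norm_sub_le ((x - y) * b) (b * (x - y))]

end NormedRing

section CStarAlgebra

variable {A : Type*} [CStarAlgebra A]

lemma norm_cfc_sub_aeval_le {a : A} (ha : IsSelfAdjoint a) {f : ℝ → ℝ} {s : Set ℝ}
    (hs : spectrum ℝ a ⊆ s) (hf : ContinuousOn f s) {p : ℝ[X]} {ε : ℝ} (hε : 0 ≤ ε)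
    (hp : ∀ x ∈ s, |p.eval x - f x| ≤ ε) :
    ‖cfc f a - aeval a p‖ ≤ ε := by
  obtain _ | _ := subsingleton_or_nontrivial A
  · simpa [Subsingleton.elim (cfc f a - aeval a p) 0] using hε
  rw [← cfc_polynomial p a, ← cfc_sub f p.eval a (hf.mono hs)]
  refine norm_cfc_le hε fun x hx ↦ ?_
  rw [Real.norm_eq_abs, abs_sub_comm]
  exact hp x (hs hx)

variable [PartialOrder A] [StarOrderedRing A]

lemma spectrum_subset_Icc_norm_of_nonneg {a : A} (ha : 0 ≤ a) : spectrum ℝ a ⊆ Icc 0 ‖a‖ := by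
  nontriviality A
  exact fun x hx ↦ ⟨spectrum_nonneg_of_nonneg ha hx,
    (le_abs_self x).trans (spectrum.norm_le_norm_of_mem hx)⟩

lemma CFC.sqrt_eq_cfc_real_sqrt {a : A} (ha : 0 ≤ a) : CFC.sqrt a = cfc Real.sqrt a := by
  rw [CFC.sqrt_eq_real_sqrt a ha, cfcₙ_eq_cfc]

end CStarAlgebra

/-- For every `δ > 0` there is a constant `D > 0` such that for every unital C*-algebra `A`,
every positive `a : A` with `‖a‖ ≤ 1` and every `b : A` with `‖b‖ ≤ 1`, one has
`‖b·√a − √a·b‖ ≤ D·‖a·b − b·a‖ + δ`, where `√a` is the positive square root given by the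
continuous functional calculus. -/
theorem sqrt_almost_commutes (δ : ℝ) (hδ : 0 < δ) :
    ∃ D : ℝ, 0 < D ∧
      ∀ (A : Type) [CStarAlgebra A] [PartialOrder A] [StarOrderedRing A]
        (a b : A), 0 ≤ a → ‖a‖ ≤ 1 → ‖b‖ ≤ 1 →
        ‖b * CFC.sqrt a - CFC.sqrt a * b‖ ≤ D * ‖a * b - b * a‖ + δ := by
  obtain ⟨p, hp⟩ := exists_polynomial_near_of_continuousOn 0 1 Real.sqrt
    Real.continuous_sqrt.continuousOn (δ / 2) (half_pos hδ)
  set C := ∑ i ∈ Finset.range (p.natDegree + 1), ‖p.coeff i‖ * i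
  refine ⟨C + 1, by positivity, fun A _ _ _ a b ha hna hnb ↦ ?_⟩
  have happrox : ‖CFC.sqrt a - aeval a p‖ ≤ δ / 2 := by
    rw [CFC.sqrt_eq_cfc_real_sqrt ha]
    exact norm_cfc_sub_aeval_le (.of_nonneg ha)
      ((spectrum_subset_Icc_norm_of_nonneg ha).trans (Icc_subset_Icc_right hna))
      Real.continuous_sqrt.continuousOn
      (half_pos hδ).le fun x hx ↦ (hp x hx).le
  calc ‖b * CFC.sqrt a - CFC.sqrt a * b‖
      = ‖CFC.sqrt a * b - b * CFC.sqrt a‖ := norm_sub_rev _ _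
    _ ≤ ‖aeval a p * b - b * aeval a p‖ + 2 * ‖CFC.sqrt a - aeval a p‖ :=
      norm_mul_sub_mul_le_of_norm_le_one hnb _ _
    _ ≤ C * ‖a * b - b * a‖ + 2 * (δ / 2) := by
      gcongr
      exact norm_aeval_mul_sub_mul_aeval_le hna b p
    _ ≤ (C + 1) * ‖a * b - b * a‖ + δ := by linarith [norm_nonneg (a * b - b * a)]
end

section
/- Let H be a complex Hilbert space, let u and v be unitary operators on H with u·v = v·u, let p be an orthogonal projection on H, and let t ≥ 0 satisfy ‖p·v − v·p‖ ≤ t. Then ‖(p·v·p)·(p·u*·p·u·p) − (p·u*·p·u·p)·(p·v·p)‖ ≤ 3t. -/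
/-!
With `x = u* p u` and `c = ⁅p, v⁆`, idempotence of `p` gives
`⁅pvp, pxp⁆ = p⁅v, x⁆p - p c x p - p x c p`. Since `v` commutes with the unitary `u`,
`⁅v, u* p u⁆ = u*⁅v, p⁆u` has norm `‖c‖`, and `‖x‖ = ‖p‖ ≤ 1`; hence the bound `3‖c‖`.
-/

section NormedRing

variable {A : Type*} [NormedRing A]

theorem lie_compression_eq {p : A} (hp : IsIdempotentElem p) (v x : A) :
    ⁅p * v * p, p * x * p⁆ = p * ⁅v, x⁆ * p - p * ⁅p, v⁆ * x * p - p * x * ⁅p, v⁆ * p := by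
  have hpp : ∀ y : A, p * (p * y) = p * y := fun y => by rw [← mul_assoc, hp.eq]
  simp only [Ring.lie_def, mul_sub, sub_mul, mul_assoc, hp.eq, hpp]
  abel

theorem norm_lie_compression_le {p : A} (hp : IsIdempotentElem p) (hp1 : ‖p‖ ≤ 1) (v x : A) :
    ‖⁅p * v * p, p * x * p⁆‖ ≤ ‖⁅v, x⁆‖ + 2 * ‖x‖ * ‖⁅p, v⁆‖ := by
  have hcompress : ∀ y : A, ‖p * y * p‖ ≤ ‖y‖ := fun y =>
    calc ‖p * y * p‖ ≤ ‖p‖ * ‖y‖ * ‖p‖ := norm_mul₃_le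
      _ ≤ 1 * ‖y‖ * 1 := by gcongr
      _ = ‖y‖ := by ring
  rw [lie_compression_eq hp]
  calc _ ≤ ‖p * ⁅v, x⁆ * p‖ + ‖p * (⁅p, v⁆ * x) * p‖ + ‖p * (x * ⁅p, v⁆) * p‖ := by
        simp only [mul_assoc]
        exact (norm_sub_le _ _).trans (by gcongr; exact norm_sub_le _ _)
    _ ≤ ‖⁅v, x⁆‖ + ‖⁅p, v⁆ * x‖ + ‖x * ⁅p, v⁆‖ := by gcongr <;> exact hcompress _
    _ ≤ ‖⁅v, x⁆‖ + ‖⁅p, v⁆‖ * ‖x‖ + ‖x‖ * ‖⁅p, v⁆‖ := by gcongr <;> exact norm_mul_le _ _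
    _ = ‖⁅v, x⁆‖ + 2 * ‖x‖ * ‖⁅p, v⁆‖ := by ring

end NormedRing

theorem lie_unitary_conj_eq {A : Type*} [Ring A] [StarRing A] {u v : A}
    (hu : u ∈ unitary A) (huv : Commute u v) (p : A) :
    ⁅v, star u * p * u⁆ = star u * ⁅v, p⁆ * u := by
  have hv : star u * v * u = v := (commute_unitary_iff_star_left_conjugate hu).1 huv
  have hu' : u * star u = 1 := Unitary.mul_star_self_of_mem hu
  calc ⁅v, star u * p * u⁆ = ⁅star u * v * u, star u * p * u⁆ := by rw [hv]
    _ = star u * v * (u * star u) * p * u - star u * p * (u * star u) * v * u := by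
      rw [Ring.lie_def]; noncomm_ring
    _ = star u * ⁅v, p⁆ * u := by rw [hu', Ring.lie_def]; noncomm_ring

section CStarRing

variable {A : Type*} [NormedRing A] [StarRing A] [CStarRing A]

theorem norm_lie_unitary_conj {u v : A} (hu : u ∈ unitary A) (huv : Commute u v) (p : A) :
    ‖⁅v, star u * p * u⁆‖ = ‖⁅p, v⁆‖ := by
  rw [lie_unitary_conj_eq hu huv, CStarRing.norm_mul_mem_unitary _ hu,
    CStarRing.norm_mem_unitary_mul _ (Unitary.star_mem hu), Ring.lie_def, Ring.lie_def,
    norm_sub_rev]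

end CStarRing

theorem compression_commutator_bound_general {H : Type} [NormedAddCommGroup H]
    [InnerProductSpace ℂ H] [CompleteSpace H]
    (u v p : H →L[ℂ] H)
    (hu : u ∈ unitary (H →L[ℂ] H))
    (huv : u * v = v * u)
    (hp_sa : IsSelfAdjoint p) (hp_idem : IsIdempotentElem p)
    (t : ℝ) (hpv : ‖p * v - v * p‖ ≤ t) :
    ‖(p * v * p) * (p * star u * p * u * p) - (p * star u * p * u * p) * (p * v * p)‖
      ≤ 3 * t := by
  have hp1 : ‖p‖ ≤ 1 := IsStarProjection.norm_le p ⟨hp_idem, hp_sa⟩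
  have hx1 : ‖star u * p * u‖ ≤ 1 := by
    rwa [CStarRing.norm_mul_mem_unitary _ hu,
      CStarRing.norm_mem_unitary_mul _ (Unitary.star_mem hu)]
  rw [← Ring.lie_def] at hpv
  calc _ = ‖⁅p * v * p, p * (star u * p * u) * p⁆‖ := by simp only [Ring.lie_def, mul_assoc]
    _ ≤ ‖⁅v, star u * p * u⁆‖ + 2 * ‖star u * p * u‖ * ‖⁅p, v⁆‖ :=
      norm_lie_compression_le hp_idem hp1 v _
    _ ≤ ‖⁅p, v⁆‖ + 2 * 1 * ‖⁅p, v⁆‖ := by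
      rw [norm_lie_unitary_conj hu huv]; gcongr
    _ ≤ 3 * t := by linarith

/-- If `u, v` are commuting unitaries on a complex Hilbert space `H`, `p` is an orthogonal
projection and `‖p·v − v·p‖ ≤ t`, then
`‖(p·v·p)·(p·u*·p·u·p) − (p·u*·p·u·p)·(p·v·p)‖ ≤ 3t`. -/
theorem compression_commutator_bound {H : Type} [NormedAddCommGroup H]
    [InnerProductSpace ℂ H] [CompleteSpace H]
    (u v p : H →L[ℂ] H)
    (hu : u ∈ unitary (H →L[ℂ] H)) (hv : v ∈ unitary (H →L[ℂ] H))
    (huv : u * v = v * u)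
    (hp_sa : IsSelfAdjoint p) (hp_idem : IsIdempotentElem p)
    (t : ℝ) (ht : 0 ≤ t) (hpv : ‖p * v - v * p‖ ≤ t) :
    ‖(p * v * p) * (p * star u * p * u * p) - (p * star u * p * u * p) * (p * v * p)‖
      ≤ 3 * t :=
  compression_commutator_bound_general u v p hu huv hp_sa hp_idem t hpv
end

section
/- Let H be a complex Hilbert space and let A be a unital separable C*-subalgebra of B(H) that is quasidiagonal, i.e., there is an increasing sequence of finite-rank orthogonal projections (p_i) on H tending to the identity in the strong operator topology such that ‖x·p_i − p_i·x‖ → 0 as i → ∞ for every x ∈ A. Let x_1, …, x_n ∈ A. Then for every ε > 0, every finite family P_1, …, P_r of *-polynomials in n variables, and every finite family ξ_1, …, ξ_s of vectors in H, there exists a finite-rank orthogonal projection p on H such that: (i) ‖P_i(p·x_1·p, …, p·x_n·p)ξ_j − P_i(x_1, …, x_n)ξ_j‖ < ε for all 1 ≤ i ≤ r and 1 ≤ j ≤ s, where the evaluations are taken in B(H); and (ii) |‖P_i(c_p(x_1), …, c_p(x_n))‖_{B(pH)} − ‖P_i(x_1, …, x_n)‖_{B(H)}| < ε for all 1 ≤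 i ≤ r, where pH is the (finite-dimensional) range of p and c_p(x) ∈ B(pH) denotes the compression of x to pH (the map ξ ↦ p(xξ) restricted to pH), the evaluation being taken in the unital algebra B(pH). -/
open Filter Topology

/-- Evaluation of a `*`-polynomial in `n` variables (an element of
`FreeAlgebra ℂ (Fin n ⊕ Fin n)`) at an `n`-tuple of a unital complex `*`-algebra:
`Sum.inl i ↦ x i` and `Sum.inr i ↦ star (x i)`. -/
noncomputable def starEval {A : Type*} [Ring A] [Algebra ℂ A] [StarRing A] {n : ℕ}
    (P : FreeAlgebra ℂ (Fin n ⊕ Fin n)) (x : Fin n → A) : A :=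
  FreeAlgebra.lift ℂ (Sum.elim x fun i => star (x i)) P

/-- The compression `c_p(x) : pH → pH`, `ξ ↦ p (x ξ)`, of `x` to the range of `p`. -/
noncomputable def compress {H : Type*} [NormedAddCommGroup H] [InnerProductSpace ℂ H]
    (p x : H →L[ℂ] H) : LinearMap.range (p : H →ₗ[ℂ] H) →L[ℂ] LinearMap.range (p : H →ₗ[ℂ] H) :=
  (p.codRestrict (LinearMap.range (p : H →ₗ[ℂ] H)) fun ξ => LinearMap.mem_range_self (p : H →ₗ[ℂ] H) ξ).comp
    (x.comp (LinearMap.range (p : H →ₗ[ℂ] H)).subtypeL)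

/-!
Let `pᵢ` be the projections witnessing quasidiagonality.

(i) `pᵢ x pᵢ → x` strongly with `‖pᵢ x pᵢ‖ ≤ ‖x‖`, and on norm-bounded sets operator multiplication is
jointly continuous for the strong operator topology, so `P(pᵢ x pᵢ) → P(x)` strongly.

(ii) The compression `c = c_{pᵢ}` is linear, unital, `*`-preserving and contractive, and
`‖c(a) c(b) - c(ab)‖ ≤ ‖a‖ ‖pᵢ b - b pᵢ‖`. Quasidiagonality therefore makes `c_{pᵢ}` asymptotically
multiplicative on `A`, whence `‖P(c_{pᵢ}(x)) - c_{pᵢ}(P(x))‖ → 0`. Finally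
`‖pᵢ y pᵢ‖ ≤ ‖c_{pᵢ}(y)‖ ≤ ‖y‖`, and `‖pᵢ y pᵢ‖ → ‖y‖` because the operator norm is lower
semicontinuous for the strong operator topology.
-/

section StrongConvergence

variable {ι 𝕜 E : Type*} [NontriviallyNormedField 𝕜] [NormedAddCommGroup E] [NormedSpace 𝕜 E]

def TendstoBoundedStrongly (T : ι → E →L[𝕜] E) (l : Filter ι) (T₀ : E →L[𝕜] E) : Prop :=
  (∃ C, ∀ i, ‖T i‖ ≤ C) ∧ ∀ ξ, Tendsto (fun i => T i ξ) l (𝓝 (T₀ ξ))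

namespace TendstoBoundedStrongly

variable {l : Filter ι} {T S : ι → E →L[𝕜] E} {T₀ S₀ : E →L[𝕜] E}

theorem const (T₀ : E →L[𝕜] E) : TendstoBoundedStrongly (fun _ => T₀) l T₀ :=
  ⟨⟨‖T₀‖, fun _ => le_rfl⟩, fun _ => tendsto_const_nhds⟩

theorem add (hT : TendstoBoundedStrongly T l T₀) (hS : TendstoBoundedStrongly S l S₀) :
    TendstoBoundedStrongly (fun i => T i + S i) l (T₀ + S₀) :=
  ⟨let ⟨C, hC⟩ := hT.1; let ⟨D, hD⟩ := hS.1
    ⟨C + D, fun i => (norm_add_le _ _).trans (add_le_add (hC i) (hD i))⟩,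
    fun ξ => (hT.2 ξ).add (hS.2 ξ)⟩

theorem mul (hT : TendstoBoundedStrongly T l T₀) (hS : TendstoBoundedStrongly S l S₀) :
    TendstoBoundedStrongly (fun i => T i * S i) l (T₀ * S₀) := by
  obtain ⟨⟨C, hC⟩, hTξ⟩ := hT
  obtain ⟨⟨D, hD⟩, hSξ⟩ := hS
  refine ⟨⟨C * D, fun i => (norm_mul_le _ _).trans <|
    mul_le_mul (hC i) (hD i) (norm_nonneg _) ((norm_nonneg _).trans (hC i))⟩, fun ξ => ?_⟩
  rw [tendsto_iff_norm_sub_tendsto_zero]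
  have hbound : ∀ i, ‖(T i * S i) ξ - (T₀ * S₀) ξ‖ ≤
      C * ‖S i ξ - S₀ ξ‖ + ‖T i (S₀ ξ) - T₀ (S₀ ξ)‖ := fun i => calc
    _ = ‖T i (S i ξ - S₀ ξ) + (T i (S₀ ξ) - T₀ (S₀ ξ))‖ := by simp
    _ ≤ ‖T i (S i ξ - S₀ ξ)‖ + ‖T i (S₀ ξ) - T₀ (S₀ ξ)‖ := norm_add_le _ _
    _ ≤ _ := by gcongr; exact ((T i).le_opNorm _).trans (by gcongr; exact hC i)
  refine squeeze_zero (fun _ => norm_nonneg _) hbound ?_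
  simpa using ((tendsto_iff_norm_sub_tendsto_zero.1 (hSξ ξ)).const_mul C).add
    (tendsto_iff_norm_sub_tendsto_zero.1 (hTξ (S₀ ξ)))

theorem freeAlgebra_lift {X : Type*} {f : ι → X → E →L[𝕜] E} {f₀ : X → E →L[𝕜] E}
    (hf : ∀ g, TendstoBoundedStrongly (fun i => f i g) l (f₀ g)) (P : FreeAlgebra 𝕜 X) :
    TendstoBoundedStrongly (fun i => FreeAlgebra.lift 𝕜 (f i) P) l (FreeAlgebra.lift 𝕜 f₀ P) := by
  induction P with
  | grade0 c => simpa only [AlgHom.commutes] using const _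
  | grade1 g => simpa only [FreeAlgebra.lift_ι_apply] using hf g
  | mul P Q hP hQ => simpa only [map_mul] using hP.mul hQ
  | add P Q hP hQ => simpa only [map_add] using hP.add hQ

theorem conj {p : ι → E →L[𝕜] E} (hp : TendstoBoundedStrongly p l 1) (y : E →L[𝕜] E) :
    TendstoBoundedStrongly (fun i => p i * y * p i) l y := by
  simpa using (hp.mul (.const y)).mul hp

end TendstoBoundedStrongly

end StrongConvergence

theorem tendsto_opNorm_of_tendsto_apply {ι 𝕜 E : Type*} [DenselyNormedField 𝕜]
    [NormedAddCommGroup E] [NormedSpace 𝕜 E] {l : Filter ι} {T : ι → E →L[𝕜] E} {T₀ : E →L[𝕜] E}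
    (hT : ∀ ξ, Tendsto (fun i => T i ξ) l (𝓝 (T₀ ξ))) (hle : ∀ i, ‖T i‖ ≤ ‖T₀‖) :
    Tendsto (fun i => ‖T i‖) l (𝓝 ‖T₀‖) := by
  refine tendsto_order.2
    ⟨fun a ha => ?_, fun a ha => Eventually.of_forall fun i => (hle i).trans_lt ha⟩
  obtain ⟨ζ, hζ, haζ⟩ := T₀.exists_lt_apply_of_lt_opNorm ha
  filter_upwards [((hT ζ).norm).eventually (eventually_gt_nhds haζ)] with i hi
  calc a < ‖T i ζ‖ := hi
    _ ≤ ‖T i‖ * ‖ζ‖ := (T i).le_opNorm ζ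
    _ ≤ ‖T i‖ := mul_le_of_le_one_right (norm_nonneg _) hζ.le

section Compression

variable {H : Type*} [NormedAddCommGroup H] [InnerProductSpace ℂ H]

@[simp]
theorem compress_apply_coe (p y : H →L[ℂ] H) (η : LinearMap.range (p : H →ₗ[ℂ] H)) :
    (compress p y η : H) = p (y η) := rfl

noncomputable def compressLinearMap (p : H →L[ℂ] H) :
    (H →L[ℂ] H) →ₗ[ℂ] (LinearMap.range (p : H →ₗ[ℂ] H) →L[ℂ] LinearMap.range (p : H →ₗ[ℂ] H)) where
  toFun := compress p
  map_add' a b := by ext; simp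
  map_smul' c a := by ext; simp

@[simp]
theorem compressLinearMap_apply (p y : H →L[ℂ] H) : compressLinearMap p y = compress p y := rfl

theorem apply_eq_self_of_mem_range {p : H →L[ℂ] H} (hp : IsIdempotentElem p)
    (η : LinearMap.range (p : H →ₗ[ℂ] H)) : p η = η :=
  (LinearMap.IsIdempotentElem.mem_range_iff
    (ContinuousLinearMap.IsIdempotentElem.toLinearMap hp)).1 η.2

theorem compress_one {p : H →L[ℂ] H} (hp : IsIdempotentElem p) : compress p 1 = 1 := by
  ext η
  exact apply_eq_self_of_mem_range hp η

theorem compress_mul_compress (p a b : H →L[ℂ] H) :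
    compress p a * compress p b = compress p (a * p * b) := rfl

theorem compress_mul_right {p : H →L[ℂ] H} (hp : IsIdempotentElem p) (y : H →L[ℂ] H) :
    compress p (y * p) = compress p y := by
  ext η
  simp [apply_eq_self_of_mem_range hp η]

theorem compress_star [CompleteSpace H] {p : H →L[ℂ] H} (hp : IsStarProjection p)
    [CompleteSpace (LinearMap.range (p : H →ₗ[ℂ] H))] (y : H →L[ℂ] H) :
    compress p (star y) = star (compress p y) := by
  simp only [ContinuousLinearMap.star_eq_adjoint]
  rw [ContinuousLinearMap.eq_adjoint_iff]
  intro a b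
  have hsym : ∀ u v : H, inner ℂ (p u) v = inner ℂ u (p v) := hp.isSelfAdjoint.isSymmetric
  simp only [Submodule.coe_inner, compress_apply_coe]
  rw [hsym, apply_eq_self_of_mem_range hp.isIdempotentElem b,
    ContinuousLinearMap.adjoint_inner_left, ← hsym,
    apply_eq_self_of_mem_range hp.isIdempotentElem a]

theorem norm_compress_le {p : H →L[ℂ] H} (hp : ‖p‖ ≤ 1) (y : H →L[ℂ] H) :
    ‖compress p y‖ ≤ ‖y‖ :=
  ContinuousLinearMap.opNorm_le_bound _ (norm_nonneg y) fun η =>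
    ((p.le_opNorm _).trans (mul_le_of_le_one_left (norm_nonneg _) hp)).trans (y.le_opNorm η)

theorem norm_mul_mul_le_norm_compress {p : H →L[ℂ] H} (hp : ‖p‖ ≤ 1) (y : H →L[ℂ] H) :
    ‖p * y * p‖ ≤ ‖compress p y‖ := by
  refine ContinuousLinearMap.opNorm_le_bound _ (norm_nonneg (compress p y)) fun ζ => ?_
  calc ‖(p * y * p) ζ‖ = ‖compress p y ⟨p ζ, LinearMap.mem_range_self _ ζ⟩‖ := rfl
    _ ≤ ‖compress p y‖ * ‖p ζ‖ := (compress p y).le_opNorm _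
    _ ≤ ‖compress p y‖ * ‖ζ‖ := by
      gcongr; exact (p.le_opNorm ζ).trans (mul_le_of_le_one_left (norm_nonneg _) hp)

theorem norm_compress_mul_sub_le {p : H →L[ℂ] H} (hp : IsIdempotentElem p) (hp₁ : ‖p‖ ≤ 1)
    (a b : H →L[ℂ] H) :
    ‖compress p a * compress p b - compress p (a * b)‖ ≤ ‖a‖ * ‖p * b - b * p‖ := by
  have hcomm : (a * p * b - a * b) * p = a * (p * b - b * p) * p := by
    simp only [sub_mul, mul_sub, mul_assoc, hp.eq]
  have hsub : compress p (a * p * b) - compress p (a * b) = compress p (a * (p * b - b * p)) := by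
    rw [← compress_mul_right hp (a * (p * b - b * p)), ← hcomm, compress_mul_right hp]
    exact (map_sub (compressLinearMap p) _ _).symm
  calc ‖compress p a * compress p b - compress p (a * b)‖
      = ‖compress p (a * (p * b - b * p))‖ := by rw [compress_mul_compress, hsub]
    _ ≤ ‖a * (p * b - b * p)‖ := norm_compress_le hp₁ _
    _ ≤ ‖a‖ * ‖p * b - b * p‖ := norm_mul_le _ _

end Compression

theorem tendsto_norm_lift_sub_map_lift {ι 𝕜 X B : Type*} {C : ι → Type*} [CommSemiring 𝕜]
    [NormedRing B] [Algebra 𝕜 B] [∀ i, NormedRing (C i)] [∀ i, Algebra 𝕜 (C i)] {l : Filter ι}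
    (φ : ∀ i, B →ₗ[𝕜] C i) (hφ_one : ∀ i, φ i 1 = 1) (hφ_norm : ∀ i b, ‖φ i b‖ ≤ ‖b‖)
    {S : Subalgebra 𝕜 B}
    (hφ_mul : ∀ a ∈ S, ∀ b ∈ S, Tendsto (fun i => ‖φ i a * φ i b - φ i (a * b)‖) l (𝓝 0))
    {g : X → B} (hg : ∀ x, g x ∈ S) (P : FreeAlgebra 𝕜 X) :
    Tendsto (fun i => ‖FreeAlgebra.lift 𝕜 (fun x => φ i (g x)) P - φ i (FreeAlgebra.lift 𝕜 g P)‖)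
      l (𝓝 0) := by
  have hS : ∀ Q, FreeAlgebra.lift 𝕜 g Q ∈ S := fun Q =>
    Algebra.adjoin_le (Set.range_subset_iff.2 hg)
      (Algebra.adjoin_range_eq_range_freeAlgebra_lift (R := 𝕜) (f := g) ▸ AlgHom.mem_range_self _ Q)
  induction P with
  | grade0 c =>
    simp [Algebra.algebraMap_eq_smul_one, hφ_one, tendsto_const_nhds]
  | grade1 x => simp [tendsto_const_nhds]
  | add P Q hP hQ =>
    refine squeeze_zero (fun _ => norm_nonneg _) (fun i => ?_) (by simpa using hP.add hQ)
    simp only [map_add]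
    exact (norm_add_le _ _).trans_eq' (by congr 1; abel)
  | mul P Q hP hQ =>
    set y₁ := FreeAlgebra.lift 𝕜 g P
    set y₂ := FreeAlgebra.lift 𝕜 g Q
    set e₁ := fun i => FreeAlgebra.lift 𝕜 (fun x => φ i (g x)) P
    set e₂ := fun i => FreeAlgebra.lift 𝕜 (fun x => φ i (g x)) Q
    have hbound : ∀ i, ‖e₁ i * e₂ i - φ i (y₁ * y₂)‖
        ≤ ‖e₁ i - φ i y₁‖ * (‖y₂‖ + ‖e₂ i - φ i y₂‖) + ‖y₁‖ * ‖e₂ i - φ i y₂‖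
          + ‖φ i y₁ * φ i y₂ - φ i (y₁ * y₂)‖ := fun i => calc
      _ = ‖(e₁ i - φ i y₁) * (φ i y₂ + (e₂ i - φ i y₂)) + φ i y₁ * (e₂ i - φ i y₂)
          + (φ i y₁ * φ i y₂ - φ i (y₁ * y₂))‖ := by congr 1; noncomm_ring
      _ ≤ _ := by
        refine norm_add₃_le.trans (add_le_add (add_le_add ?_ ?_) le_rfl)
        · exact (norm_mul_le _ _).trans
            (by gcongr; exact (norm_add_le _ _).trans (by gcongr; exact hφ_norm i y₂))
        · exact (norm_mul_le _ _).trans (by gcongr; exact hφ_norm i y₁)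
    refine squeeze_zero (fun _ => norm_nonneg _)
      (fun i => by simpa only [map_mul] using hbound i) ?_
    simpa using ((hP.mul (hQ.const_add ‖y₂‖)).add (hQ.const_mul ‖y₁‖)).add
      (hφ_mul y₁ (hS P) y₂ (hS Q))

section Quasidiagonal

variable {ι H : Type*} [NormedAddCommGroup H] [InnerProductSpace ℂ H] [CompleteSpace H]
  {l : Filter ι} {p : ι → H →L[ℂ] H}

theorem tendstoBoundedStrongly_one_of_isStarProjection (hp : ∀ i, IsStarProjection (p i))
    (hstrong : ∀ ξ, Tendsto (fun i => p i ξ) l (𝓝 ξ)) : TendstoBoundedStrongly p l 1 :=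
  ⟨⟨1, fun i => (hp i).norm_le⟩, hstrong⟩

theorem tendsto_starEval_conj_apply (hp : ∀ i, IsStarProjection (p i))
    (hstrong : ∀ ξ, Tendsto (fun i => p i ξ) l (𝓝 ξ)) {n : ℕ} (x : Fin n → H →L[ℂ] H)
    (P : FreeAlgebra ℂ (Fin n ⊕ Fin n)) (ξ : H) :
    Tendsto (fun i => starEval P (fun a => p i * x a * p i) ξ) l (𝓝 (starEval P x ξ)) := by
  have hp₁ := tendstoBoundedStrongly_one_of_isStarProjection hp hstrong
  refine (TendstoBoundedStrongly.freeAlgebra_lift (fun g => ?_) P).2 ξ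
  rcases g with a | a
  · exact hp₁.conj (x a)
  · simpa [star_mul, (hp _).isSelfAdjoint.star_eq, mul_assoc] using hp₁.conj (star (x a))

theorem tendsto_norm_compress (hp : ∀ i, IsStarProjection (p i))
    (hstrong : ∀ ξ, Tendsto (fun i => p i ξ) l (𝓝 ξ)) (y : H →L[ℂ] H) :
    Tendsto (fun i => ‖compress (p i) y‖) l (𝓝 ‖y‖) := by
  have hlower := fun i => norm_mul_mul_le_norm_compress (hp i).norm_le y
  have hupper := fun i => norm_compress_le (hp i).norm_le y
  refine tendsto_of_tendsto_of_tendsto_of_le_of_le ?_ tendsto_const_nhds hlower hupper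
  exact tendsto_opNorm_of_tendsto_apply
    ((tendstoBoundedStrongly_one_of_isStarProjection hp hstrong).conj y).2
    fun i => (hlower i).trans (hupper i)

theorem tendsto_norm_compress_mul_sub (hp : ∀ i, IsStarProjection (p i)) {a b : H →L[ℂ] H}
    (hb : Tendsto (fun i => ‖b * p i - p i * b‖) l (𝓝 0)) :
    Tendsto (fun i => ‖compress (p i) a * compress (p i) b - compress (p i) (a * b)‖) l (𝓝 0) :=
  squeeze_zero
    (fun i => norm_nonneg (compress (p i) a * compress (p i) b - compress (p i) (a * b)))
    (fun i => norm_compress_mul_sub_le (hp i).isIdempotentElem (hp i).norm_le a b)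
    (by simpa [norm_sub_rev] using hb.const_mul ‖a‖)

theorem tendsto_norm_starEval_compress_sub (A : StarSubalgebra ℂ (H →L[ℂ] H))
    (hp : ∀ i, IsStarProjection (p i)) [∀ i, CompleteSpace (LinearMap.range (p i : H →ₗ[ℂ] H))]
    (hcomm : ∀ y ∈ A, Tendsto (fun i => ‖y * p i - p i * y‖) l (𝓝 0))
    {n : ℕ} {x : Fin n → H →L[ℂ] H} (hx : ∀ a, x a ∈ A) (P : FreeAlgebra ℂ (Fin n ⊕ Fin n)) :
    Tendsto (fun i => ‖starEval P (fun a => compress (p i) (x a))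
      - compress (p i) (starEval P x)‖) l (𝓝 0) := by
  have hdefect := tendsto_norm_lift_sub_map_lift (S := A.toSubalgebra)
    (C := fun i => LinearMap.range (p i : H →ₗ[ℂ] H) →L[ℂ] LinearMap.range (p i : H →ₗ[ℂ] H))
    (fun i => compressLinearMap (p i))
    (fun i => compress_one (hp i).isIdempotentElem) (fun i => norm_compress_le (hp i).norm_le)
    (fun a _ b hb => by
      simpa only [compressLinearMap_apply] using tendsto_norm_compress_mul_sub hp (hcomm b hb))
    (g := Sum.elim x fun a => star (x a))
    (by rintro (a | a); exacts [hx a, show star (x a) ∈ A from star_mem (hx a)]) P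
  have hgen i : (Sum.elim (fun a => compress (p i) (x a)) fun a => star (compress (p i) (x a)))
      = fun g => compress (p i) (Sum.elim x (fun a => star (x a)) g) := by
    ext (a | a) : 1 <;> simp [compress_star (hp i)]
  simpa only [compressLinearMap_apply, starEval, hgen] using hdefect

theorem tendsto_norm_starEval_compress (A : StarSubalgebra ℂ (H →L[ℂ] H))
    (hp : ∀ i, IsStarProjection (p i)) [∀ i, CompleteSpace (LinearMap.range (p i : H →ₗ[ℂ] H))]
    (hstrong : ∀ ξ, Tendsto (fun i => p i ξ) l (𝓝 ξ))
    (hcomm : ∀ y ∈ A, Tendsto (fun i => ‖y * p i - p i * y‖) l (𝓝 0))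
    {n : ℕ} {x : Fin n → H →L[ℂ] H} (hx : ∀ a, x a ∈ A) (P : FreeAlgebra ℂ (Fin n ⊕ Fin n)) :
    Tendsto (fun i => ‖starEval P (fun a => compress (p i) (x a))‖) l (𝓝 ‖starEval P x‖) := by
  have hdiff i : ‖‖starEval P (fun a => compress (p i) (x a))‖ - ‖compress (p i) (starEval P x)‖‖
      ≤ ‖starEval P (fun a => compress (p i) (x a)) - compress (p i) (starEval P x)‖ :=
    (Real.norm_eq_abs _).trans_le (abs_norm_sub_norm_le (starEval P fun a => compress (p i) (x a))
      (compress (p i) (starEval P x)))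
  simpa only [add_sub_cancel, add_zero] using (tendsto_norm_compress hp hstrong (starEval P x)).add
    (squeeze_zero_norm hdiff (tendsto_norm_starEval_compress_sub A hp hcomm hx P))

end Quasidiagonal

theorem quasidiagonal_compression_general
    {H : Type} [NormedAddCommGroup H] [InnerProductSpace ℂ H] [CompleteSpace H]
    (A : StarSubalgebra ℂ (H →L[ℂ] H))
    (hqd : ∃ p : ℕ → H →L[ℂ] H,
      (∀ i, IsSelfAdjoint (p i) ∧ IsIdempotentElem (p i) ∧
        FiniteDimensional ℂ (LinearMap.range (p i : H →ₗ[ℂ] H))) ∧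
      Monotone (fun i => LinearMap.range (p i : H →ₗ[ℂ] H)) ∧
      (∀ ξ : H, Tendsto (fun i => p i ξ) atTop (𝓝 ξ)) ∧
      (∀ x ∈ A, Tendsto (fun i => ‖x * p i - p i * x‖) atTop (𝓝 (0 : ℝ))))
    (n : ℕ) (x : Fin n → H →L[ℂ] H) (hx : ∀ i, x i ∈ A)
    (ε : ℝ) (hε : 0 < ε)
    (r s : ℕ) (P : Fin r → FreeAlgebra ℂ (Fin n ⊕ Fin n)) (ξ : Fin s → H) :
    ∃ p : H →L[ℂ] H, IsSelfAdjoint p ∧ IsIdempotentElem p ∧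
      ∃ _ : FiniteDimensional ℂ (LinearMap.range (p : H →ₗ[ℂ] H)),
        (∀ (i : Fin r) (j : Fin s),
          ‖starEval (P i) (fun a => p * x a * p) (ξ j) - starEval (P i) x (ξ j)‖ < ε) ∧
        (∀ i : Fin r,
          |‖starEval (P i) (fun a => compress p (x a))‖ - ‖starEval (P i) x‖| < ε) := by
  obtain ⟨p, hp, -, hstrong, hcomm⟩ := hqd
  have hproj i : IsStarProjection (p i) := ⟨(hp i).2.1, (hp i).1⟩
  have hfin i : FiniteDimensional ℂ (LinearMap.range (p i : H →ₗ[ℂ] H)) := (hp i).2.2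
  have hvec : ∀ k j, ∀ᶠ i in atTop,
      ‖starEval (P k) (fun a => p i * x a * p i) (ξ j) - starEval (P k) x (ξ j)‖ < ε := fun k j =>
    (tendsto_iff_norm_sub_tendsto_zero.1
      (tendsto_starEval_conj_apply hproj hstrong x (P k) (ξ j))).eventually (eventually_lt_nhds hε)
  have hnorm : ∀ k, ∀ᶠ i in atTop,
      |‖starEval (P k) (fun a => compress (p i) (x a))‖ - ‖starEval (P k) x‖| < ε := fun k =>
    Metric.tendsto_nhds.1 (tendsto_norm_starEval_compress A hproj hstrong hcomm hx (P k)) ε hε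
  obtain ⟨i, hi_vec, hi_norm⟩ :=
    ((eventually_all.2 fun k => eventually_all.2 (hvec k)).and (eventually_all.2 hnorm)).exists
  exact ⟨p i, (hp i).1, (hp i).2.1, hfin i, hi_vec, hi_norm⟩

/-- If `A ⊆ B(H)` is a unital separable quasidiagonal C*-algebra and `x_1, …, x_n ∈ A`, then
for every `ε > 0`, finitely many `*`-polynomials `P_1, …, P_r` and vectors `ξ_1, …, ξ_s ∈ H`,
there is a finite-rank orthogonal projection `p` such that
(i) `‖P_i(p x_1 p, …, p x_n p) ξ_j − P_i(x_1, …, x_n) ξ_j‖ < ε` and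
(ii) `|‖P_i(c_p(x_1), …, c_p(x_n))‖_{B(pH)} − ‖P_i(x_1, …, x_n)‖| < ε`. -/
theorem quasidiagonal_compression
    {H : Type} [NormedAddCommGroup H] [InnerProductSpace ℂ H] [CompleteSpace H]
    (A : StarSubalgebra ℂ (H →L[ℂ] H)) (hA : IsClosed (A : Set (H →L[ℂ] H)))
    [TopologicalSpace.SeparableSpace A]
    (hqd : ∃ p : ℕ → H →L[ℂ] H,
      (∀ i, IsSelfAdjoint (p i) ∧ IsIdempotentElem (p i) ∧
        FiniteDimensional ℂ (LinearMap.range (p i : H →ₗ[ℂ] H))) ∧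
      Monotone (fun i => LinearMap.range (p i : H →ₗ[ℂ] H)) ∧
      (∀ ξ : H, Tendsto (fun i => p i ξ) atTop (𝓝 ξ)) ∧
      (∀ x ∈ A, Tendsto (fun i => ‖x * p i - p i * x‖) atTop (𝓝 (0 : ℝ))))
    (n : ℕ) (x : Fin n → H →L[ℂ] H) (hx : ∀ i, x i ∈ A)
    (ε : ℝ) (hε : 0 < ε)
    (r s : ℕ) (P : Fin r → FreeAlgebra ℂ (Fin n ⊕ Fin n)) (ξ : Fin s → H) :
    ∃ p : H →L[ℂ] H, IsSelfAdjoint p ∧ IsIdempotentElem p ∧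
      ∃ _ : FiniteDimensional ℂ (LinearMap.range (p : H →ₗ[ℂ] H)),
        (∀ (i : Fin r) (j : Fin s),
          ‖starEval (P i) (fun a => p * x a * p) (ξ j) - starEval (P i) x (ξ j)‖ < ε) ∧
        (∀ i : Fin r,
          |‖starEval (P i) (fun a => compress p (x a))‖ - ‖starEval (P i) x‖| < ε) :=
  quasidiagonal_compression_general A hqd n x hx ε hε r s P ξ
end

section
/- Let n ≥ 1 and let F be the free group on generators g_1, …, g_n. For each permutation σ of {1, …, n}, let α(σ) be the automorphism of F determined by α(σ)(g_i) = g_{σ(i)}. Let g = (g_1·g_2·⋯·g_n)^3. Then for every m ≥ 1, all integers k_1, …, k_m with k_i ≠ 0 for each i, and all permutations β_0, β_1, …, β_{m−1} of {1, …, n} with β_0 = identity and β_{i−1} ≠ β_i for 1 ≤ i ≤ m−1, the element (α(β_0)(g))^{k_1}·(α(β_1)(g))^{k_2}·⋯·(α(β_{m−1})(g))^{k_m} is not equal to the identity of F. -/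
/-- The homomorphism `α` from `Equiv.Perm (Fin n)` into the automorphism group of
`FreeGroup (Fin n)` determined by `α(σ)(gᵢ) = g_{σ(i)}`. -/
def permAut (n : ℕ) : Equiv.Perm (Fin n) →* MulAut (FreeGroup (Fin n)) where
  toFun σ := FreeGroup.freeGroupCongr σ
  map_one' := FreeGroup.freeGroupCongr_refl
  map_mul' σ τ := (FreeGroup.freeGroupCongr_trans τ σ).symm

/-- `g = (g₁ · g₂ · ⋯ · gₙ)³` in the free group on `g₁, …, gₙ`. -/
def gWord (n : ℕ) : FreeGroup (Fin n) :=
  ((List.ofFn fun i : Fin n => FreeGroup.of i).prod) ^ 3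

/-!
Ping-pong on reduced words. Write `α(σ)(g) = x_σ ^ 3` with `x_σ = g_{σ(1)} ⋯ g_{σ(n)}`, a positive
word of length `n`. If the reduced word of `w` does not begin with `x_σ⁻¹`, fewer than `n` letters
of `x_σ ^ 3` cancel in `x_σ ^ 3 * w`, so the result begins with `x_σ`; symmetrically for the
inverse. Distinct permutations give distinct words `x_σ`, so the ping-pong lemma shows that the
`α(σ)(g)` freely generate a free subgroup, and the product in question is the image of a
nontrivial reduced word in these free generators. For `n = 1` there is a single permutation,
hence `m = 1`, and the product is a nonzero power of `g ≠ 1`.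
-/

namespace FreeGroup

open List

universe u

variable {α : Type u}

theorem prod_ofFn_of_zpow_ne_one {m : ℕ} (hm : m ≠ 0) {b : Fin m → α}
    {k : Fin m → ℤ} (hk : ∀ i, k i ≠ 0)
    (hb : ∀ (i : ℕ) (h : i + 1 < m), b ⟨i, Nat.lt_of_succ_lt h⟩ ≠ b ⟨i + 1, h⟩) :
    (ofFn fun i => of (b i) ^ k i).prod ≠ 1 := by
  classical
  -- a reduced word of the free product of copies of `FreeGroup Unit ≃ ℤ` (`freeGroupEquivCoprodI`)
  let w : Monoid.CoprodI.Word fun _ : α => FreeGroup Unit :=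
    { toList := ofFn fun i => ⟨b i, of () ^ k i⟩
      ne_one := by
        simp only [forall_mem_ofFn_iff]
        exact fun i => (IsMulTorsionFree.zpow_eq_one_iff_right (of_ne_one _)).not.2 (hk i)
      chain_ne := isChain_ofFn.2 hb }
  have hw : freeGroupEquivCoprodI (ofFn fun i => of (b i) ^ k i).prod = w.prod := by
    simp [w, Monoid.CoprodI.Word.prod, map_list_prod, map_ofFn, Function.comp_def]
  intro h
  have : w = .empty := Monoid.CoprodI.Word.equiv.symm.injective (by
    change w.prod = Monoid.CoprodI.Word.empty.prod
    rw [← hw, h, MulEquiv.map_one, Monoid.CoprodI.Word.prod_empty])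
  simpa [w, hm] using congrArg Monoid.CoprodI.Word.toList this

theorem isCyclicallyReduced_of_forall_snd_eq {L : List (α × Bool)} {s : Bool}
    (h : ∀ a ∈ L, a.2 = s) : IsCyclicallyReduced L := by
  refine ⟨Pairwise.isChain (pairwise_of_forall_mem_list fun a ha b hb _ => ?_),
    fun a ha b hb _ => ?_⟩
  · rw [h a ha, h b hb]
  · rw [h a (mem_of_mem_getLast? ha), h b (mem_of_mem_head? hb)]

variable [DecidableEq α]

theorem IsReduced.exists_reduce_append {u v : List (α × Bool)} (hu : IsReduced u)
    (hv : IsReduced v) :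
    ∃ a b c, u = a ++ c ∧ v = invRev c ++ b ∧ reduce (u ++ v) = a ++ b := by
  induction u with
  | nil => exact ⟨[], v, [], rfl, rfl, hv.reduce_eq⟩
  | cons x u ih =>
    obtain ⟨a, b, c, rfl, rfl, hred⟩ := ih (hu.infix (suffix_cons x u).isInfix)
    have hab : IsReduced (a ++ b) := hred ▸ IsReduced.of_reduce_eq reduce.idem
    rw [cons_append, ← reduce_cons_reduce, hred]
    rcases a with _ | ⟨y, a⟩
    · simp only [nil_append] at hab ⊢
      rcases b with _ | ⟨y, b⟩
      · exact ⟨[x], [], c, rfl, rfl, rfl⟩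
      by_cases hxy : y = (x.1, !x.2)
      · subst hxy
        refine ⟨[], b, x :: c, rfl, by simp [invRev], ?_⟩
        rw [show reduce (x :: (x.1, !x.2) :: b) = reduce b from
          reduce.Step.eq (Red.Step.not (L₁ := []))]
        exact (hab.infix (suffix_cons _ b).isInfix).reduce_eq
      · refine ⟨[x], y :: b, c, rfl, rfl, IsReduced.reduce_eq ?_⟩
        refine isReduced_cons_cons.2 ⟨fun h => ?_, hab⟩
        obtain ⟨x1, x2⟩ := x
        obtain ⟨y1, y2⟩ := y
        simp only at h hxy
        cases x2 <;> cases y2 <;> simp_all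
    · refine ⟨x :: y :: a, b, c, rfl, rfl, IsReduced.reduce_eq ?_⟩
      exact IsReduced.append_overlap (L₁ := [x]) (hu.infix ⟨[], c, rfl⟩) hab (cons_ne_nil y a)

theorem isPrefix_toWord_mul {x w : FreeGroup α} {p q : List (α × Bool)}
    (hx : toWord x = p ++ q) (hw : ¬ invRev q <+: toWord w) : p <+: toWord (x * w) := by
  obtain ⟨a, b, c, hac, hcb, hred⟩ :=
    isReduced_toWord.exists_reduce_append (isReduced_toWord (x := w))
  rw [toWord_mul, hred]
  rw [hx] at hac
  by_cases hc : q.length ≤ c.length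
  · obtain ⟨c', rfl⟩ :=
      suffix_of_suffix_length_le (hac ▸ suffix_append p q) (suffix_append a c) hc
    exact absurd (hcb ▸ by simp [invRev_append]) hw
  · exact (prefix_of_prefix_length_le (hac ▸ prefix_append p q) (prefix_append a c)
      (by have := congrArg length hac; simp at this; omega)).trans (prefix_append a b)

theorem isPrefix_toWord_pow_mul {x w : FreeGroup α} (hx : IsCyclicallyReduced (toWord x))
    {k : ℕ} (hk : 2 ≤ k) (hw : ¬ toWord x⁻¹ <+: toWord w) :
    toWord x <+: toWord (x ^ k * w) := by
  obtain ⟨j, rfl⟩ : ∃ j, k = j + 1 + 1 := ⟨k - 2, by omega⟩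
  have hpow : toWord (x ^ (j + 1 + 1)) = (replicate (j + 1) (toWord x)).flatten ++ toWord x := by
    rw [toWord_pow, (hx.flatten_replicate _).isReduced.reduce_eq, replicate_succ', flatten_concat]
  refine IsPrefix.trans ?_ (isPrefix_toWord_mul hpow (by rwa [← toWord_inv]))
  rw [replicate_succ, flatten_cons]
  exact prefix_append _ _

theorem toWord_prod_ofFn_of {ℓ : ℕ} (f : Fin ℓ → α) :
    toWord (ofFn fun j => of (f j)).prod = ofFn fun j => (f j, true) := by
  have : (ofFn fun j => of (f j)).prod = mk (ofFn fun j => (f j, true)) := by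
    have := lift_mk (f := (of : α → FreeGroup α)) (L := ofFn fun j => (f j, true))
    rw [lift_of_apply] at this
    simpa [map_ofFn, Function.comp_def] using this.symm
  rw [this, toWord_mk, (isCyclicallyReduced_of_forall_snd_eq (s := true) _).isReduced.reduce_eq]
  simp [mem_ofFn]

-- `ι` and `α` share a universe because `injective_lift_of_ping_pong` requires it.
theorem injective_lift_pow_prod_ofFn_of {ι : Type u} [Nontrivial ι] {ℓ : ℕ}
    {f : ι → Fin ℓ → α} (hf : Function.Injective f) {k : ℕ} (hk : 2 ≤ k) :
    Function.Injective (lift fun i => (ofFn fun j => of (f i j)).prod ^ k) := by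
  set x : ι → FreeGroup α := fun i => (ofFn fun j => of (f i j)).prod
  have hpos (i : ι) : ∀ a ∈ toWord (x i), a.2 = true := by
    simp [x, toWord_prod_ofFn_of, mem_ofFn]
  have hneg (i : ι) : ∀ a ∈ toWord (x i)⁻¹, a.2 = false := by
    simp [x, toWord_inv, invRev, toWord_prod_ofFn_of, mem_ofFn]
  have hlen (i : ι) : (toWord (x i)).length = ℓ := by simp [x, toWord_prod_ofFn_of]
  have hlen_inv (i : ι) : (toWord (x i)⁻¹).length = ℓ := by rw [toWord_inv, invRev_length, hlen]
  have hx : Function.Injective x := fun i j h => hf <| by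
    have := congrArg toWord h
    simp only [x, toWord_prod_ofFn_of, ofFn_inj] at this
    exact funext fun j => congrArg Prod.fst (congrFun this j)
  have hℓ : ℓ ≠ 0 := by
    rintro rfl
    obtain ⟨i, j, hij⟩ := exists_pair_ne ι
    exact hij (hf (Subsingleton.elim _ _))
  have prefix_eq {u v w : List (α × Bool)} (hu : u <+: w) (hv : v <+: w)
      (h : u.length = v.length) : u = v :=
    (prefix_of_prefix_length_le hu hv h.le).eq_of_length h
  apply injective_lift_of_ping_pong _
    (fun i => {w | toWord (x i) <+: toWord w}) (fun i => {w | toWord (x i)⁻¹ <+: toWord w})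
  · exact fun i => ⟨x i, prefix_refl _⟩
  · refine fun i j hij => Set.disjoint_left.2 fun w hi hj => hij (hx (toWord_injective ?_))
    exact prefix_eq hi hj (by rw [hlen, hlen])
  · refine fun i j hij => Set.disjoint_left.2 fun w hi hj =>
      hij (hx (inv_injective (toWord_injective ?_)))
    exact prefix_eq hi hj (by rw [hlen_inv, hlen_inv])
  · refine fun i j => Set.disjoint_left.2 fun w hi hj => ?_
    have heq := prefix_eq hi hj (by rw [hlen, hlen_inv])
    obtain ⟨a, ha⟩ := exists_mem_of_length_pos (by rw [hlen]; omega : 0 < (toWord (x i)).length)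
    exact Bool.false_ne_true ((hneg j a (heq ▸ ha)).symm.trans (hpos i a ha))
  · rintro i _ ⟨w, hw, rfl⟩
    exact isPrefix_toWord_pow_mul (isCyclicallyReduced_of_forall_snd_eq (hpos i)) hk hw
  · rintro i _ ⟨w, hw, rfl⟩
    change (x i ^ k)⁻¹ * w ∈ _
    rw [← inv_pow]
    refine isPrefix_toWord_pow_mul (isCyclicallyReduced_of_forall_snd_eq (hneg i)) hk ?_
    rwa [inv_inv]

end FreeGroup

open FreeGroup

theorem permAut_apply_gWord (n : ℕ) (σ : Equiv.Perm (Fin n)) :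
    permAut n σ (gWord n) = (List.ofFn fun j => of (σ j)).prod ^ 3 := by
  simp [permAut, gWord, freeGroupCongr_apply, map_list_prod, List.map_ofFn, Function.comp_def]

theorem gWord_ne_one {n : ℕ} (hn : n ≠ 0) : gWord n ≠ 1 := by
  rw [gWord, Ne, pow_eq_one_iff_left three_ne_zero, ← toWord_eq_nil_iff,
    toWord_prod_ofFn_of (fun i => i)]
  simpa using hn

theorem gWord_perm_product_ne_one_general (n : ℕ) (hn : 1 ≤ n) (m : ℕ) (hm : 1 ≤ m)
    (k : Fin m → ℤ) (hk : ∀ i, k i ≠ 0)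
    (β : Fin m → Equiv.Perm (Fin n))
    (hβ : ∀ (i : ℕ) (h : i + 1 < m),
      β ⟨i, Nat.lt_of_succ_lt h⟩ ≠ β ⟨i + 1, h⟩) :
    (List.ofFn fun i : Fin m => (permAut n (β i) (gWord n)) ^ (k i)).prod ≠ 1 := by
  rcases subsingleton_or_nontrivial (Equiv.Perm (Fin n)) with _ | _
  · obtain rfl : m = 1 := by
      by_contra
      exact hβ 0 (by omega) (Subsingleton.elim _ _)
    have hg : permAut n (β 0) (gWord n) ≠ 1 := by
      simpa using gWord_ne_one (by omega)
    simpa using (IsMulTorsionFree.zpow_eq_one_iff_right hg).not.2 (hk 0)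
  · have hlift : (List.ofFn fun i => permAut n (β i) (gWord n) ^ k i).prod =
        lift (fun σ : Equiv.Perm (Fin n) => (List.ofFn fun j => of (σ j)).prod ^ 3)
          (List.ofFn fun i => of (β i) ^ k i).prod := by
      simp [map_list_prod, List.map_ofFn, Function.comp_def, permAut_apply_gWord]
    rw [hlift, ← _root_.map_one (lift _)]
    exact (injective_lift_pow_prod_ofFn_of DFunLike.coe_injective (by norm_num)).ne
      (prod_ofFn_of_zpow_ne_one (by omega) hk hβ)

/-- For nonzero integers `k₁, …, kₘ` and permutations `β₀ = 1, β₁, …, β_{m−1}` with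
`β_{i−1} ≠ β_i` for `1 ≤ i ≤ m − 1`, the word
`(α(β₀)(g))^{k₁} · (α(β₁)(g))^{k₂} · ⋯ · (α(β_{m−1})(g))^{kₘ}` is not the identity. -/
theorem gWord_perm_product_ne_one (n : ℕ) (hn : 1 ≤ n) (m : ℕ) (hm : 1 ≤ m)
    (k : Fin m → ℤ) (hk : ∀ i, k i ≠ 0)
    (β : Fin m → Equiv.Perm (Fin n)) (hβ0 : β ⟨0, hm⟩ = 1)
    (hβ : ∀ (i : ℕ) (h : i + 1 < m),
      β ⟨i, Nat.lt_of_succ_lt h⟩ ≠ β ⟨i + 1, h⟩) :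
    (List.ofFn fun i : Fin m => (permAut n (β i) (gWord n)) ^ (k i)).prod ≠ 1 :=
  gWord_perm_product_ne_one_general n hn m hm k hk β hβ
end

section
/- Let ℓ²(ℤ) denote the Hilbert space of square-summable complex sequences indexed by ℤ, and let u be the bilateral shift on ℓ²(ℤ), i.e., the bounded operator satisfying (u f)(k) = f(k − 1) for all f ∈ ℓ²(ℤ) and k ∈ ℤ (equivalently, u e_k = e_{k+1} on the standard orthonormal basis). Then there exists a sequence (q_j) of finite-rank orthogonal projections on ℓ²(ℤ) such that q_j → 1 in the strong operator topology (i.e., q_j f → f for every f ∈ ℓ²(ℤ)) and ‖u·q_j − q_j·u‖ → 0 as j → ∞. -/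
/-!
Berg's construction. The unit vectors `f k = cos (kπ/2n) e k + sin (kπ/2n) e (k - n)`,
`0 ≤ k < n`, are orthonormal, and since the same formula at `k = n` gives `e 0 = f 0`, the
shift maps `f k` to `f (k + 1 mod n)` up to an error `2 sin (π/4n) • w k` with `(w k)` again
orthonormal. For the projection `Q` onto the span of the `f k` this gives
`‖u Q - Q u‖ ≤ 4 sin (π/4n)`.

Strong convergence then needs no computation: the vectors `x` with `Q n x → x` form a closed
subspace (the `Q n` are contractions) which contains `e 0 = f 0`, and because the commutators
tend to zero it contains `x` if and only if it contains `u x`; so it contains every `e k`.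
-/

open Filter Topology Set Submodule Real
open scoped InnerProductSpace lp NNReal

instance finiteDimensional_span_range {𝕜 E ι : Type*} [RCLike 𝕜] [NormedAddCommGroup E]
    [InnerProductSpace 𝕜 E] [Finite ι] (v : ι → E) : FiniteDimensional 𝕜 (span 𝕜 (range v)) :=
  FiniteDimensional.span_of_finite 𝕜 (finite_range v)

section InnerProduct

variable {𝕜 E ι : Type*} [RCLike 𝕜] [NormedAddCommGroup E] [InnerProductSpace 𝕜 E] [Fintype ι]
  {v w : ι → E}

theorem Orthonormal.norm_sum_inner_smul_le (hv : Orthonormal 𝕜 v) (hw : Orthonormal 𝕜 w)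
    (x : E) : ‖∑ k, ⟪v k, x⟫_𝕜 • w k‖ ≤ ‖x‖ := by
  have hsq : ‖∑ k, ⟪v k, x⟫_𝕜 • w k‖ ^ 2 = ∑ k, ‖⟪v k, x⟫_𝕜‖ ^ 2 := by
    rw [← RCLike.ofReal_inj (K := 𝕜), RCLike.ofReal_pow, ← inner_self_eq_norm_sq_to_K,
      hw.inner_sum]
    simp only [RCLike.conj_mul]
    push_cast
    rfl
  refine (pow_le_pow_iff_left₀ (norm_nonneg _) (norm_nonneg x) two_ne_zero).mp ?_
  simpa [hsq] using hv.sum_inner_products_le (s := Finset.univ) (x := x)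

theorem Orthonormal.starProjection_span_apply (hv : Orthonormal 𝕜 v) (x : E) :
    (span 𝕜 (range v)).starProjection x = ∑ k, ⟪v k, x⟫_𝕜 • v k := by
  refine eq_starProjection_of_mem_of_inner_eq_zero
    (sum_mem fun k _ => smul_mem _ _ (subset_span (mem_range_self k))) fun y hy => ?_
  induction hy using span_induction with
  | mem _ hy =>
    obtain ⟨l, rfl⟩ := hy
    simp [inner_sub_left, hv.inner_left_fintype]
  | zero => simp
  | add _ _ _ _ h₁ h₂ => rw [inner_add_right, h₁, h₂, add_zero]
  | smul _ _ _ h => rw [inner_smul_right, h, mul_zero]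

theorem Orthonormal.norm_commutator_starProjection_span_le {u : E →L[𝕜] E}
    (hu : ∀ x, ‖u x‖ = ‖x‖) (hv : Orthonormal 𝕜 v) (hw : Orthonormal 𝕜 w)
    (σ : Equiv.Perm ι) {c : ℝ} (hc : 0 ≤ c) (h : ∀ k, u (v k) = v (σ k) + (c : 𝕜) • w k) :
    ‖u * (span 𝕜 (range v)).starProjection - (span 𝕜 (range v)).starProjection * u‖ ≤
      2 * c := by
  set P := (span 𝕜 (range v)).starProjection
  have hinner : ∀ x y, ⟪u x, u y⟫_𝕜 = ⟪x, y⟫_𝕜 :=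
    (⟨u.toLinearMap, hu⟩ : E →ₗᵢ[𝕜] E).inner_map_map
  refine ContinuousLinearMap.opNorm_le_bound _ (by positivity) fun x => ?_
  have hsplit : (u * P - P * u) x =
      (c : 𝕜) • ∑ k, ⟪v k, x⟫_𝕜 • w k + (c : 𝕜) • ∑ k, ⟪w k, u x⟫_𝕜 • v (σ k) := by
    simp only [P, sub_apply, mul_apply_eq_comp, hv.starProjection_span_apply, map_sum, map_smul]
    rw [← Equiv.sum_comp σ (fun k => ⟪v k, u x⟫_𝕜 • v k), Finset.smul_sum, Finset.smul_sum,
      ← Finset.sum_sub_distrib, ← Finset.sum_add_distrib]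
    refine Finset.sum_congr rfl fun k _ => ?_
    have hk : ⟪v (σ k), u x⟫_𝕜 = ⟪v k, x⟫_𝕜 - c * ⟪w k, u x⟫_𝕜 := by
      rw [← hinner (v k) x, h k, inner_add_left, inner_smul_left, RCLike.conj_ofReal]
      ring
    rw [h k, hk]
    module
  have hnorm : ∀ y : E, ‖(c : 𝕜) • y‖ = c * ‖y‖ := fun y => by
    rw [norm_smul, RCLike.norm_ofReal, abs_of_nonneg hc]
  calc ‖(u * P - P * u) x‖ ≤ c * ‖x‖ + c * ‖u x‖ := by
        rw [hsplit]
        refine norm_add_le_of_le ?_ ?_ <;> rw [hnorm] <;> gcongr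
        · exact hv.norm_sum_inner_smul_le hw x
        · exact hw.norm_sum_inner_smul_le (hv.comp σ σ.injective) (u x)
    _ = 2 * c * ‖x‖ := by rw [hu]; ring

end InnerProduct

section StrongConvergence

variable {𝕜 E α : Type*} [NontriviallyNormedField 𝕜] [NormedAddCommGroup E] [NormedSpace 𝕜 E]
  {l : Filter α} {Q : α → E →L[𝕜] E}

theorem tendsto_apply_map_iff_of_tendsto_commutator {u : E →L[𝕜] E} (hu : ∀ x, ‖u x‖ = ‖x‖)
    (hQ : Tendsto (fun a => ‖u * Q a - Q a * u‖) l (𝓝 0)) (x : E) :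
    Tendsto (fun a => Q a (u x)) l (𝓝 (u x)) ↔ Tendsto (fun a => Q a x) l (𝓝 x) := by
  have hdist : Tendsto (fun a => dist (Q a (u x)) (u (Q a x))) l (𝓝 0) := by
    refine squeeze_zero (fun _ => dist_nonneg) (fun a => ?_) (by simpa using hQ.mul_const ‖x‖)
    rw [dist_comm, dist_eq_norm]
    exact (u * Q a - Q a * u).le_opNorm x
  rw [tendsto_iff_of_dist hdist, ((AddMonoidHomClass.isometry_iff_norm u).mpr hu).isEmbedding
    |>.tendsto_nhds_iff (f := fun a => Q a x)]
  rfl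

theorem tendsto_apply_of_dense_span {C : ℝ≥0} (hQ : ∀ a, ‖Q a‖ ≤ C) {s : Set E}
    (hs : (span 𝕜 s).topologicalClosure = ⊤)
    (h : ∀ x ∈ s, Tendsto (fun a => Q a x) l (𝓝 x)) (x : E) :
    Tendsto (fun a => Q a x) l (𝓝 x) := by
  let S : Submodule 𝕜 E :=
    { carrier := {x | Tendsto (fun a => Q a x) l (𝓝 x)}
      add_mem' := fun hx hy => by simpa using hx.add hy
      zero_mem' := by simpa using tendsto_const_nhds
      smul_mem' := fun c _ hx => by simpa using hx.const_smul c }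
  have hS : IsClosed (S : Set E) :=
    (LipschitzWith.uniformEquicontinuous _ C fun a =>
      (Q a).lipschitzWith_of_opNorm_le (hQ a)).equicontinuous.isClosed_setOfPred_tendsto
      continuous_id
  have hx : x ∈ (span 𝕜 s).topologicalClosure := hs ▸ Submodule.mem_top
  exact (span 𝕜 s).topologicalClosure_minimal (span_le.mpr h : span 𝕜 s ≤ S) hS hx

end StrongConvergence

namespace BilateralShift

noncomputable abbrev e : HilbertBasis ℤ ℂ ℓ²(ℤ, ℂ) := default

theorem e_eq_single (i : ℤ) : e i = lp.single 2 i 1 :=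
  e.repr_self i

theorem e_apply (i j : ℤ) : e i j = if j = i then 1 else 0 := by
  rw [e_eq_single, lp.single_apply, Pi.single_apply]

theorem inner_e_e (i j : ℤ) : ⟪e i, e j⟫_ℂ = if i = j then 1 else 0 :=
  orthonormal_iff_ite.mp e.orthonormal i j

noncomputable def rotVec (φ : ℝ) (i j : ℤ) : ℓ²(ℤ, ℂ) := (cos φ : ℂ) • e i + (sin φ : ℂ) • e j

theorem rotVec_sub_rotVec (a b : ℝ) (i j : ℤ) :
    rotVec a i j - rotVec b i j =
      ((2 * sin ((b - a) / 2) : ℝ) : ℂ) • rotVec ((a + b) / 2 - π / 2) i j := by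
  have hc : cos a - cos b = 2 * sin ((b - a) / 2) * cos ((a + b) / 2 - π / 2) := by
    rw [cos_sub_pi_div_two, show a = (a + b) / 2 - (b - a) / 2 by ring,
      show b = (a + b) / 2 + (b - a) / 2 by ring, cos_sub, cos_add]
    ring_nf
  have hs : sin a - sin b = 2 * sin ((b - a) / 2) * sin ((a + b) / 2 - π / 2) := by
    rw [sin_sub_pi_div_two, show a = (a + b) / 2 - (b - a) / 2 by ring,
      show b = (a + b) / 2 + (b - a) / 2 by ring, sin_sub, sin_add]
    ring_nf
  calc rotVec a i j - rotVec b i j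
      = ((cos a - cos b : ℝ) : ℂ) • e i + ((sin a - sin b : ℝ) : ℂ) • e j := by
        simp only [rotVec, Complex.ofReal_sub, sub_smul]
        abel
    _ = _ := by
        rw [hc, hs, rotVec, smul_add, ← mul_smul, ← mul_smul, ← Complex.ofReal_mul,
          ← Complex.ofReal_mul]

theorem orthonormal_rotVec (n : ℕ) (s : ℤ) (φ : Fin n → ℝ) :
    Orthonormal ℂ fun k : Fin n => rotVec (φ k) (k + s) (k - n + s) := by
  rw [orthonormal_iff_ite]
  intro k l
  simp only [rotVec, inner_add_left, inner_add_right, inner_smul_left, inner_smul_right,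
    inner_e_e, Complex.conj_ofReal]
  rw [if_neg (by omega : ¬((k : ℤ) + s = l - n + s)),
    if_neg (by omega : ¬((k : ℤ) - n + s = l + s))]
  by_cases hkl : k = l
  · subst hkl
    simp only [if_true, mul_zero, add_zero, zero_add, mul_one, ← sq]
    exact_mod_cast cos_sq_add_sin_sq (φ k)
  · have h₁ : ¬((k : ℤ) + s = l + s) := by omega
    have h₂ : ¬((k : ℤ) - n + s = l - n + s) := by omega
    simp [h₁, h₂, hkl]

/-- The vector `f_{k,j}` of the construction, for `n = n_j`. -/
noncomputable def bergVec (n k : ℕ) : ℓ²(ℤ, ℂ) := rotVec (k * π / (2 * n)) k (k - n)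

noncomputable def bergProj (n : ℕ) : ℓ²(ℤ, ℂ) →L[ℂ] ℓ²(ℤ, ℂ) :=
  (span ℂ (range fun k : Fin n => bergVec n k)).starProjection

theorem orthonormal_bergVec (n : ℕ) : Orthonormal ℂ fun k : Fin n => bergVec n k := by
  simpa [bergVec] using orthonormal_rotVec n 0 fun k => k * π / (2 * n)

theorem bergVec_zero (n : ℕ) : bergVec n 0 = e 0 := by
  simp [bergVec, rotVec]

theorem bergVec_self {n : ℕ} (hn : n ≠ 0) : bergVec n n = e 0 := by
  have hangle : (n : ℝ) * π / (2 * n) = π / 2 := by field_simp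
  simp [bergVec, rotVec, hangle]

theorem bergVec_finRotate {n : ℕ} (k : Fin n) :
    bergVec n (finRotate n k) = bergVec n (k + 1) := by
  obtain ⟨m, rfl⟩ := Nat.exists_eq_succ_of_ne_zero k.pos.ne'
  rw [coe_finRotate]
  split_ifs with h
  · rw [h, Fin.val_last, bergVec_zero, bergVec_self m.succ_ne_zero]
  · rfl

section Shift

variable {u : ℓ²(ℤ, ℂ) →L[ℂ] ℓ²(ℤ, ℂ)}
  (hu : ∀ (f : ℓ²(ℤ, ℂ)) (k : ℤ), (u f : ∀ _ : ℤ, ℂ) k = f (k - 1))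
include hu

theorem shift_e (i : ℤ) : u (e i) = e (i + 1) := by
  ext k
  rw [hu, e_apply, e_apply]
  exact if_congr (by omega) rfl rfl

theorem norm_shift (x : ℓ²(ℤ, ℂ)) : ‖u x‖ = ‖x‖ := by
  have h2 : 0 < (2 : ENNReal).toReal := by norm_num
  rw [lp.norm_eq_tsum_rpow h2, lp.norm_eq_tsum_rpow h2]
  simp only [hu]
  congr 1
  exact (Equiv.subRight (1 : ℤ)).tsum_eq (fun k => ‖x k‖ ^ (2 : ENNReal).toReal)

theorem shift_rotVec (φ : ℝ) (i j : ℤ) : u (rotVec φ i j) = rotVec φ (i + 1) (j + 1) := by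
  rw [rotVec, rotVec, map_add, map_smul, map_smul, shift_e hu, shift_e hu]

theorem shift_bergVec (n k : ℕ) :
    u (bergVec n k) = bergVec n (k + 1) + ((2 * sin (π / (4 * n)) : ℝ) : ℂ) •
      rotVec ((2 * k + 1) * π / (4 * n) - π / 2) (k + 1) (k - n + 1) := by
  have hsub := rotVec_sub_rotVec (k * π / (2 * n)) ((k + 1) * π / (2 * n)) (k + 1) (k - n + 1)
  rw [show ((k + 1) * π / (2 * n) - k * π / (2 * n)) / 2 = π / (4 * n) by ring,
    show (k * π / (2 * n) + (k + 1) * π / (2 * n)) / 2 = (2 * k + 1) * π / (4 * n) by ring]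
    at hsub
  rw [← hsub, bergVec, shift_rotVec hu, bergVec]
  push_cast
  rw [show (k : ℤ) + 1 - n = k - n + 1 by ring]
  abel

theorem norm_commutator_bergProj_le {n : ℕ} (hn : n ≠ 0) :
    ‖u * bergProj n - bergProj n * u‖ ≤ 2 * (2 * sin (π / (4 * n))) := by
  have hc : 0 ≤ 2 * sin (π / (4 * n)) := by
    refine mul_nonneg zero_le_two (sin_nonneg_of_nonneg_of_le_pi (by positivity) ?_)
    exact div_le_self pi_pos.le (by norm_cast; omega)
  exact (orthonormal_bergVec n).norm_commutator_starProjection_span_le (norm_shift hu)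
    (orthonormal_rotVec n 1 fun k => (2 * k + 1) * π / (4 * n) - π / 2) (finRotate n) hc
    fun k => by rw [bergVec_finRotate, shift_bergVec hu]; rfl

theorem tendsto_norm_commutator_bergProj :
    Tendsto (fun n => ‖u * bergProj n - bergProj n * u‖) atTop (𝓝 0) := by
  have hangle : Tendsto (fun n : ℕ => π / (4 * n)) atTop (𝓝 0) := by
    simpa only [div_div] using tendsto_const_div_atTop_nhds_zero_nat (π / 4)
  have hbound : Tendsto (fun n : ℕ => 2 * (2 * sin (π / (4 * n)))) atTop (𝓝 0) := by
    simpa using (((continuous_sin.tendsto 0).comp hangle).const_mul 2).const_mul 2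
  refine squeeze_zero' (Eventually.of_forall fun _ => norm_nonneg _) ?_ hbound
  filter_upwards [eventually_ne_atTop 0] with n hn
  exact norm_commutator_bergProj_le hu hn

theorem tendsto_bergProj_apply (x : ℓ²(ℤ, ℂ)) :
    Tendsto (fun n => bergProj n x) atTop (𝓝 x) := by
  refine tendsto_apply_of_dense_span (C := 1) (fun _ => starProjection_norm_le _) e.dense_span
    ?_ x
  rintro _ ⟨m, rfl⟩
  have hshift := tendsto_apply_map_iff_of_tendsto_commutator (norm_shift hu)
    (tendsto_norm_commutator_bergProj hu)
  induction m using Int.induction_on with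
  | zero =>
    refine tendsto_const_nhds.congr' ?_
    filter_upwards [eventually_ne_atTop 0] with n hn
    exact (starProjection_eq_self_iff.mpr
      (subset_span (mem_range.mpr ⟨⟨0, Nat.pos_of_ne_zero hn⟩, bergVec_zero n⟩))).symm
  | succ m ih =>
    rw [← shift_e hu]
    exact (hshift _).mpr ih
  | pred m ih =>
    rw [← sub_add_cancel (-(m : ℤ)) 1, ← shift_e hu] at ih
    exact (hshift _).mp ih

end Shift

end BilateralShift

open BilateralShift in
/-- Let `u` be the bilateral shift on `ℓ²(ℤ)`, i.e. the bounded operator with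
`(u f)(k) = f(k − 1)`.  Then there is a sequence `(q_j)` of finite-rank orthogonal
projections on `ℓ²(ℤ)` converging to the identity in the strong operator topology and
satisfying `‖u·q_j − q_j·u‖ → 0`. -/
theorem bilateral_shift_quasidiagonal
    (u : lp (fun _ : ℤ => ℂ) 2 →L[ℂ] lp (fun _ : ℤ => ℂ) 2)
    (hu : ∀ (f : lp (fun _ : ℤ => ℂ) 2) (k : ℤ), (u f : ∀ _ : ℤ, ℂ) k = f (k - 1)) :
    ∃ q : ℕ → (lp (fun _ : ℤ => ℂ) 2 →L[ℂ] lp (fun _ : ℤ => ℂ) 2),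
      (∀ j, IsSelfAdjoint (q j) ∧ IsIdempotentElem (q j) ∧
        FiniteDimensional ℂ (LinearMap.range (q j).toLinearMap)) ∧
      (∀ f : lp (fun _ : ℤ => ℂ) 2, Tendsto (fun j => q j f) atTop (𝓝 f)) ∧
      Tendsto (fun j => ‖u * q j - q j * u‖) atTop (𝓝 (0 : ℝ)) := by
  refine ⟨fun j => bergProj (j + 1), fun j => ⟨isSelfAdjoint_starProjection _,
    isIdempotentElem_starProjection _, ?_⟩,
    fun f => (tendsto_bergProj_apply hu f).comp (tendsto_add_atTop_nat 1),
    (tendsto_norm_commutator_bergProj hu).comp (tendsto_add_atTop_nat 1)⟩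
  exact Submodule.finiteDimensional_of_le (range_starProjection _).le
end
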